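/- arXiv:0907.2053 — 7 statements merged into one kernel-verified Lean document; each statement's English description precedes it below -/
import Mathlib

section
/- Let D and D̄ be star tree metrics on 4 taxa with pendant weights (a,d,c,e) and (ā,d̄,c̄,ē) at leaves 1,2,3,4 respectively, all weights positive. Define s=(ā+c̄)−(a+c), t=(d̄+ē)−(d+e), x=(ā+ē)−(a+e), y=(d̄+c̄)−(d+c), u=(ā+d̄)−(a+d), w=(c̄+ē)−(c+e), and z⁺=max(z,0). Let T = D⊕D̄. Then T is a tree metric realizing the quartet (12|34), i.e. T(1,3)+T(2,4) = T(1,4)+T(2,3) > T(1,2)+T(3,4), if and only if u⁺ + w⁺ < s⁺ + t⁺ = x⁺ + y⁺. -/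
/-!
Write each entry of `T` as the entry of `D` plus the positive part of its excess in `D̄`,
e.g. `max (a + c) (ab + cb) = (a + c) + s⁺`. The three pairings of the four taxa have the same
`D`-sum `a + d + c + e`, so it cancels from both the four-point equality and the strict
inequality, leaving exactly the conditions on the positive parts.
-/

theorem max_eq_add_max_sub_zero {α : Type*} [AddCommGroup α] [LinearOrder α]
    [IsOrderedAddMonoid α] (p q : α) : max p q = p + max (q - p) 0 := by
  rw [← max_add_add_left, add_sub_cancel, add_zero, max_comm]

theorem mixture_quartet_characterization_general
    (a d c e ab db cb eb : ℝ)
    (s t x y u w : ℝ)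
    (hs : s = (ab + cb) - (a + c)) (ht : t = (db + eb) - (d + e))
    (hx : x = (ab + eb) - (a + e)) (hy : y = (db + cb) - (d + c))
    (hu : u = (ab + db) - (a + d)) (hw : w = (cb + eb) - (c + e)) :
    (max (a + c) (ab + cb) + max (d + e) (db + eb)
        = max (a + e) (ab + eb) + max (d + c) (db + cb) ∧
     max (a + d) (ab + db) + max (c + e) (cb + eb)
        < max (a + c) (ab + cb) + max (d + e) (db + eb))
    ↔ (max u 0 + max w 0 < max s 0 + max t 0 ∧
       max s 0 + max t 0 = max x 0 + max y 0) := by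
  rw [max_eq_add_max_sub_zero (a + c), max_eq_add_max_sub_zero (d + e),
    max_eq_add_max_sub_zero (a + e), max_eq_add_max_sub_zero (d + c),
    max_eq_add_max_sub_zero (a + d), max_eq_add_max_sub_zero (c + e),
    ← hs, ← ht, ← hx, ← hy, ← hu, ← hw]
  constructor <;> rintro ⟨h₁, h₂⟩ <;> constructor <;> linarith

/-- With `D`, `D̄` star tree metrics on 4 taxa as above, the mixture
`T = D ⊕ D̄` is a tree metric realizing the quartet (12|34), i.e.
`T(1,3)+T(2,4) = T(1,4)+T(2,3) > T(1,2)+T(3,4)`, if and only if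
`u⁺ + w⁺ < s⁺ + t⁺ = x⁺ + y⁺`. -/
theorem mixture_quartet_characterization
    (a d c e ab db cb eb : ℝ)
    (ha : 0 < a) (hd : 0 < d) (hc : 0 < c) (he : 0 < e)
    (hab : 0 < ab) (hdb : 0 < db) (hcb : 0 < cb) (heb : 0 < eb)
    (s t x y u w : ℝ)
    (hs : s = (ab + cb) - (a + c)) (ht : t = (db + eb) - (d + e))
    (hx : x = (ab + eb) - (a + e)) (hy : y = (db + cb) - (d + c))
    (hu : u = (ab + db) - (a + d)) (hw : w = (cb + eb) - (c + e)) :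
    (max (a + c) (ab + cb) + max (d + e) (db + eb)
        = max (a + e) (ab + eb) + max (d + c) (db + cb) ∧
     max (a + d) (ab + db) + max (c + e) (cb + eb)
        < max (a + c) (ab + cb) + max (d + e) (db + eb))
    ↔ (max u 0 + max w 0 < max s 0 + max t 0 ∧
       max s 0 + max t 0 = max x 0 + max y 0) :=
  mixture_quartet_characterization_general a d c e ab db cb eb s t x y u w hs ht hx hy hu hw
end

section
/- Let D and D̄ be star tree metrics on 4 taxa with pendant weights (a,d,c,e) and (ā,d̄,c̄,ē) at leaves 1,2,3,4 respectively, all weights positive. Define s=(ā+c̄)−(a+c), t=(d̄+ē)−(d+e), x=(ā+ē)−(a+e), y=(d̄+c̄)−(d+c). Suppose the mixture T = D⊕D̄ satisfies T(1,3)+T(2,4) = T(1,4)+T(2,3) > T(1,2)+T(3,4), and suppose s ≥ 0. Then s > 0 and t < 0, and moreover either (x = s and y = t) or (x = t and y = s). -/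
/-! Measuring every tropical sum of pendant weights relative to `D` via `max p q = p + (q - p)⁺`,
the three pair-splits of the mixture differ from those of `D` (which all equal `a + c + d + e`)
by `s⁺ + t⁺`, `x⁺ + y⁺` and `u⁺ + v⁺`, where `u`, `v` are the increments on the split `12|34`,
and `s + t = x + y = u + v`. Since `u⁺ + v⁺ ≥ u + v`, the strict inequality forces
`s⁺ + t⁺ > s + t`, i.e. `t < 0`; then `s = x⁺ + y⁺ > 0` with `x + y = s + t < s`, so exactly
one of `x`, `y` is positive, and it equals `s` while the other equals `t`. -/

theorem max_eq_add_posPart_sub {α : Type*} [AddCommGroup α] [LinearOrder α]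
    [IsOrderedAddMonoid α] (p q : α) : max p q = p + (q - p)⁺ := by
  rw [posPart_def, ← max_add_add_left, max_comm]
  simp

namespace Real

variable {s t x y u v : ℝ}

theorem neg_of_posPart_add_lt (huv : u + v = s + t) (hlt : u⁺ + v⁺ < s⁺ + t⁺) (hs : 0 ≤ s) :
    t < 0 := by
  by_contra! ht
  rw [posPart_eq_self.2 hs, posPart_eq_self.2 ht] at hlt
  linarith [le_posPart u, le_posPart v]

theorem pos_of_posPart_add_lt (hlt : u⁺ + v⁺ < s⁺ + t⁺) (hs : 0 ≤ s) (ht : t < 0) :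
    0 < s := by
  rw [posPart_eq_self.2 hs, posPart_eq_zero.2 ht.le] at hlt
  linarith [posPart_nonneg u, posPart_nonneg v]

theorem eq_of_posPart_add_eq (hxy : x + y = s + t) (hsum : x⁺ + y⁺ = s) (hs : 0 < s)
    (ht : t < 0) : (x = s ∧ y = t) ∨ (x = t ∧ y = s) := by
  rcases le_total x 0 with hx | hx <;> rcases le_total y 0 with hy | hy
  · rw [posPart_eq_zero.2 hx, posPart_eq_zero.2 hy] at hsum
    linarith
  · rw [posPart_eq_zero.2 hx, posPart_eq_self.2 hy] at hsum
    right; constructor <;> linarith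
  · rw [posPart_eq_self.2 hx, posPart_eq_zero.2 hy] at hsum
    left; constructor <;> linarith
  · rw [posPart_eq_self.2 hx, posPart_eq_self.2 hy] at hsum
    linarith

end Real

theorem mixture_quartet_sign_pattern_general
    (a d c e ab db cb eb : ℝ)
    (s t x y : ℝ)
    (hs : s = (ab + cb) - (a + c)) (ht : t = (db + eb) - (d + e))
    (hx : x = (ab + eb) - (a + e)) (hy : y = (db + cb) - (d + c))
    (hEq : max (a + c) (ab + cb) + max (d + e) (db + eb)
        = max (a + e) (ab + eb) + max (d + c) (db + cb))
    (hGt : max (a + d) (ab + db) + max (c + e) (cb + eb)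
        < max (a + c) (ab + cb) + max (d + e) (db + eb))
    (hs0 : 0 ≤ s) :
    0 < s ∧ t < 0 ∧ ((x = s ∧ y = t) ∨ (x = t ∧ y = s)) := by
  set u := (ab + db) - (a + d)
  set v := (cb + eb) - (c + e)
  simp only [max_eq_add_posPart_sub] at hEq hGt
  rw [← hs, ← ht, ← hx, ← hy] at hEq
  rw [← hs, ← ht] at hGt
  have hxy : x + y = s + t := by rw [hx, hy, hs, ht]; ring
  have huv : u + v = s + t := by rw [hs, ht]; ring
  have hlt : u⁺ + v⁺ < s⁺ + t⁺ := by linarith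
  have ht0 : t < 0 := Real.neg_of_posPart_add_lt huv hlt hs0
  have hs0' : 0 < s := Real.pos_of_posPart_add_lt hlt hs0 ht0
  have hsum : x⁺ + y⁺ = s := by
    rw [posPart_eq_self.2 hs0, posPart_eq_zero.2 ht0.le] at hEq
    linarith
  exact ⟨hs0', ht0, Real.eq_of_posPart_add_eq hxy hsum hs0' ht0⟩

/-- With `D`, `D̄` star tree metrics on 4 taxa as above, if the mixture
`T = D ⊕ D̄` satisfies `T(1,3)+T(2,4) = T(1,4)+T(2,3) > T(1,2)+T(3,4)` and `s ≥ 0`,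
then `s > 0`, `t < 0`, and either (`x = s` and `y = t`) or (`x = t` and `y = s`). -/
theorem mixture_quartet_sign_pattern
    (a d c e ab db cb eb : ℝ)
    (ha : 0 < a) (hd : 0 < d) (hc : 0 < c) (he : 0 < e)
    (hab : 0 < ab) (hdb : 0 < db) (hcb : 0 < cb) (heb : 0 < eb)
    (s t x y : ℝ)
    (hs : s = (ab + cb) - (a + c)) (ht : t = (db + eb) - (d + e))
    (hx : x = (ab + eb) - (a + e)) (hy : y = (db + cb) - (d + c))
    (hEq : max (a + c) (ab + cb) + max (d + e) (db + eb)
        = max (a + e) (ab + eb) + max (d + c) (db + cb))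
    (hGt : max (a + d) (ab + db) + max (c + e) (cb + eb)
        < max (a + c) (ab + cb) + max (d + e) (db + eb))
    (hs0 : 0 ≤ s) :
    0 < s ∧ t < 0 ∧ ((x = s ∧ y = t) ∨ (x = t ∧ y = s)) :=
  mixture_quartet_sign_pattern_general a d c e ab db cb eb s t x y hs ht hx hy hEq hGt hs0
end

section
/- Let T be the quartet tree metric (12|34) on 4 taxa with pendant weights e₁,e₂,e₃,e₄ > 0 and internal weight g > 0, that is, T(1,2)=e₁+e₂, T(3,4)=e₃+e₄, and T(i,j)=e_i+g+e_j for i∈{1,2}, j∈{3,4}. Then T is the tropical mixture of two star tree metrics on 4 taxa if and only if (e₁ > g and e₂ > g) or (e₃ > g and e₄ > g). -/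
/-- A star tree metric on `n` taxa: a dissimilarity map of the form
`D(i,j) = e i + e j` for `i ≠ j` (and `D(i,i) = 0`) with all pendant weights positive. -/
def IsStarTreeMetric {n : ℕ} (D : Fin n → Fin n → ℝ) : Prop :=
  ∃ e : Fin n → ℝ, (∀ i, 0 < e i) ∧ (∀ i, D i i = 0) ∧
    ∀ i j, i ≠ j → D i j = e i + e j

/-- `T` is the tropical mixture (pointwise maximum) of two star tree metrics. -/
def IsMixtureOfTwoStars {n : ℕ} (T : Fin n → Fin n → ℝ) : Prop :=
  ∃ D Dbar : Fin n → Fin n → ℝ, IsStarTreeMetric D ∧ IsStarTreeMetric Dbar ∧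
    ∀ i j, T i j = max (D i j) (Dbar i j)

/-- The quartet tree metric (12|34) on 4 taxa with pendant weights `e` and internal
edge weight `g`: leaves `0,1` on one side, leaves `2,3` on the other. -/
def quartetMetric (e : Fin 4 → ℝ) (g : ℝ) : Fin 4 → Fin 4 → ℝ :=
  fun i j => if i = j then 0
    else e i + e j + (if decide (i.val < 2) ≠ decide (j.val < 2) then g else 0)

/-!
Let `T` be the quartet metric. A star with weights `w` lying below `T` and attaining `T` on two
disjoint pairs `{i,k}`, `{j,l}` forces `T i k + T j l ≤ T i j + T k l`; for the two cross pairings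
`{0,2},{1,3}` and `{0,3},{1,2}` this fails since `g > 0`. So if `T` is the maximum of two stars,
the four cross pairs split between them as two "cherries": one star attains `{0,2},{0,3}` and the
other `{1,2},{1,3}`, or one attains `{0,2},{1,2}` and the other `{0,3},{1,3}`. A star attaining
`{i,k},{i,l}` has `2 w i ≥ T i k + T i l - T k l = 2 (e i + g)`, while `w i < T i j = e i + e j`
for the partner `j` of `i`; hence `g < e j`.

Conversely, for `s = (-1, 1, 0, 0)` the stars with weights `e ± g s` mix to `T`, because
`max (x + y) (x - y) = x + |y|`.
-/

def starOf {n : ℕ} (w : Fin n → ℝ) : Fin n → Fin n → ℝ :=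
  fun i j => if i = j then 0 else w i + w j

theorem isStarTreeMetric_starOf {n : ℕ} {w : Fin n → ℝ} (hw : ∀ i, 0 < w i) :
    IsStarTreeMetric (starOf w) :=
  ⟨w, hw, fun _ => if_pos rfl, fun _ _ hij => if_neg hij⟩

theorem isMixtureOfTwoStars_iff {n : ℕ} {T : Fin n → Fin n → ℝ} :
    IsMixtureOfTwoStars T ↔ (∀ i, T i i = 0) ∧ ∃ a b : Fin n → ℝ, (∀ i, 0 < a i) ∧
      (∀ i, 0 < b i) ∧ ∀ i j, i ≠ j → T i j = max (a i + a j) (b i + b j) := by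
  constructor
  · rintro ⟨D, D', ⟨a, ha, hD0, hD⟩, ⟨b, hb, hD'0, hD'⟩, hT⟩
    refine ⟨fun i => by rw [hT, hD0, hD'0, max_self], a, b, ha, hb, fun i j hij => ?_⟩
    rw [hT, hD i j hij, hD' i j hij]
  · rintro ⟨hT0, a, b, ha, hb, hT⟩
    refine ⟨starOf a, starOf b, isStarTreeMetric_starOf ha, isStarTreeMetric_starOf hb,
      fun i j => ?_⟩
    by_cases hij : i = j
    · subst hij
      simp [starOf, hT0]
    · simp only [starOf, if_neg hij, hT i j hij]

theorem isMixtureOfTwoStars_of_eq_abs {n : ℕ} {T : Fin n → Fin n → ℝ} (e s : Fin n → ℝ)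
    {g : ℝ} (hg : 0 ≤ g) (hs : ∀ i, g * |s i| < e i) (hT0 : ∀ i, T i i = 0)
    (hT : ∀ i j, i ≠ j → T i j = e i + e j + g * |s i + s j|) :
    IsMixtureOfTwoStars T := by
  refine isMixtureOfTwoStars_iff.mpr ⟨hT0, fun i => e i + g * s i, fun i => e i - g * s i,
    fun i => ?_, fun i => ?_, fun i j hij => ?_⟩
  · nlinarith [hs i, neg_abs_le (s i)]
  · nlinarith [hs i, le_abs_self (s i)]
  · rw [hT i j hij, abs_eq_max_neg, mul_max_of_nonneg _ _ hg, add_max]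
    congr 1 <;> ring

section StarBelow

variable {n : ℕ} {T : Fin n → Fin n → ℝ} {a : Fin n → ℝ} {i j k l : Fin n}

theorem add_le_add_of_attains_disjoint (hle : ∀ i j, i ≠ j → a i + a j ≤ T i j)
    (hij : i ≠ j) (hkl : k ≠ l) (hik : a i + a k = T i k) (hjl : a j + a l = T j l) :
    T i k + T j l ≤ T i j + T k l := by
  linarith [hle i j hij, hle k l hkl]

theorem sub_lt_two_mul_of_attains_adjacent (ha : ∀ i, 0 < a i)
    (hle : ∀ i j, i ≠ j → a i + a j ≤ T i j) (hij : i ≠ j) (hkl : k ≠ l)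
    (hik : a i + a k = T i k) (hil : a i + a l = T i l) :
    T i k + T i l - T k l < 2 * T i j := by
  linarith [hle i j hij, hle k l hkl, ha j]

end StarBelow

section Quartet

variable {e : Fin 4 → ℝ} {g : ℝ}

theorem quartetMetric_comm (i j : Fin 4) :
    quartetMetric e g i j = quartetMetric e g j i := by
  fin_cases i <;> fin_cases j <;> simp [quartetMetric, add_comm]

theorem quartetMetric_cross_sum_gt (hg : 0 < g) :
    quartetMetric e g 0 1 + quartetMetric e g 2 3 <
        quartetMetric e g 0 2 + quartetMetric e g 1 3 ∧
      quartetMetric e g 0 1 + quartetMetric e g 3 2 <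
        quartetMetric e g 0 3 + quartetMetric e g 1 2 := by
  simp [quartetMetric]
  constructor <;> linarith

theorem quartet_pendants_gt_of_eq_max (hg : 0 < g) {a b : Fin 4 → ℝ} (ha : ∀ i, 0 < a i)
    (hb : ∀ i, 0 < b i)
    (hT : ∀ i j, i ≠ j → quartetMetric e g i j = max (a i + a j) (b i + b j)) :
    (g < e 0 ∧ g < e 1) ∨ (g < e 2 ∧ g < e 3) := by
  set T := quartetMetric e g with hT_def
  wlog a02 : a 0 + a 2 = T 0 2 generalizing a b
  · refine this hb ha (fun i j hij => by rw [hT i j hij, max_comm]) ?_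
    obtain h | h := max_choice (a 0 + a 2) (b 0 + b 2)
    · exact absurd ((hT 0 2 (by decide)).trans h).symm a02
    · exact ((hT 0 2 (by decide)).trans h).symm
  have le_a : ∀ i j, i ≠ j → a i + a j ≤ T i j := fun i j hij =>
    (hT i j hij).ge.trans' (le_max_left _ _)
  have le_b : ∀ i j, i ≠ j → b i + b j ≤ T i j := fun i j hij =>
    (hT i j hij).ge.trans' (le_max_right _ _)
  have attains : ∀ i j, i ≠ j → a i + a j = T i j ∨ b i + b j = T i j := fun i j hij =>
    (max_choice _ _).imp (fun h => (h ▸ hT i j hij).symm) (fun h => (h ▸ hT i j hij).symm)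
  have flip : ∀ {c : Fin 4 → ℝ} {i j}, c i + c j = T i j → c j + c i = T j i := fun h => by
    rw [add_comm, h, hT_def, quartetMetric_comm]
  obtain ⟨cross₁, cross₂⟩ := quartetMetric_cross_sum_gt (e := e) hg
  have b13 : b 1 + b 3 = T 1 3 := (attains 1 3 (by decide)).resolve_left fun a13 =>
    (add_le_add_of_attains_disjoint le_a (by decide) (by decide) a02 a13).not_gt cross₁
  rcases attains 0 3 (by decide) with a03 | b03
  · have b12 : b 1 + b 2 = T 1 2 := (attains 1 2 (by decide)).resolve_left fun a12 =>
      (add_le_add_of_attains_disjoint le_a (by decide) (by decide) a03 a12).not_gt cross₂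
    have h0 := sub_lt_two_mul_of_attains_adjacent hb le_b (j := 0) (by decide) (by decide) b12 b13
    have h1 := sub_lt_two_mul_of_attains_adjacent ha le_a (j := 1) (by decide) (by decide) a02 a03
    simp [T, quartetMetric] at h0 h1
    left; constructor <;> linarith
  · have a12 : a 1 + a 2 = T 1 2 := (attains 1 2 (by decide)).resolve_right fun b12 =>
      (add_le_add_of_attains_disjoint le_b (by decide) (by decide) b03 b12).not_gt cross₂
    have h2 := sub_lt_two_mul_of_attains_adjacent hb le_b (j := 2) (by decide) (by decide)
      (flip b03) (flip b13)
    have h3 := sub_lt_two_mul_of_attains_adjacent ha le_a (j := 3) (by decide) (by decide)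
      (flip a02) (flip a12)
    simp [T, quartetMetric] at h2 h3
    right; constructor <;> linarith

theorem quartetMetric_eq_abs {s : Fin 4 → ℝ} (hs : s = ![-1, 1, 0, 0] ∨ s = ![0, 0, -1, 1])
    {i j : Fin 4} (hij : i ≠ j) : quartetMetric e g i j = e i + e j + g * |s i + s j| := by
  rcases hs with rfl | rfl <;> fin_cases i <;> fin_cases j <;> simp [quartetMetric] at hij ⊢

end Quartet

/-- The quartet (12|34) with pendant weights `e₁,e₂,e₃,e₄ > 0` and
internal weight `g > 0` is a tropical mixture of two star tree metrics iff
(`e₁ > g` and `e₂ > g`) or (`e₃ > g` and `e₄ > g`). -/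
theorem quartet_is_mixture_iff (e : Fin 4 → ℝ) (he : ∀ i, 0 < e i)
    (g : ℝ) (hg : 0 < g) :
    IsMixtureOfTwoStars (quartetMetric e g) ↔
      (g < e 0 ∧ g < e 1) ∨ (g < e 2 ∧ g < e 3) := by
  constructor
  · intro hmix
    obtain ⟨-, a, b, ha, hb, hT⟩ := isMixtureOfTwoStars_iff.mp hmix
    exact quartet_pendants_gt_of_eq_max hg ha hb hT
  · rintro (⟨h0, h1⟩ | ⟨h2, h3⟩)
    · refine isMixtureOfTwoStars_of_eq_abs e ![-1, 1, 0, 0] hg.le (fun i => ?_)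
        (fun i => by simp [quartetMetric]) (fun i j => quartetMetric_eq_abs (Or.inl rfl))
      fin_cases i <;> simp [h0, h1, he]
    · refine isMixtureOfTwoStars_of_eq_abs e ![0, 0, -1, 1] hg.le (fun i => ?_)
        (fun i => by simp [quartetMetric]) (fun i j => quartetMetric_eq_abs (Or.inr rfl))
      fin_cases i <;> simp [h2, h3, he]
end

section
/- Let T be the quartet tree metric (12|34) on 4 taxa with pendant weights e₁,e₂,e₃,e₄ > 0 and internal weight g > 0 (so T(1,2)=e₁+e₂, T(3,4)=e₃+e₄, T(i,j)=e_i+g+e_j for i∈{1,2}, j∈{3,4}), and assume e₁ > g and e₂ > g. Let u and w be real parameters with 0 ≤ u < e₁−g and 0 > w > −2·min(e₂−g, e₃, e₄). Define star tree metrics D with pendant weights a=e₁−g−u, d=e₂+g, c=e₃, e=e₄ at leaves 1,2,3,4 and D̄ with pendant weights ā=e₁+g−w/2, d̄=e₂−g+w/2, c̄=e₃+w/2, ē=e₄+w/2 at leaves 1,2,3,4. Then all eight of these weights are positive, and the tropical mixture D⊕D̄ equals T. -/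
/-- The star tree metric determined by pendant weights `a`. -/
def starMetricOf {n : ℕ} (a : Fin n → ℝ) : Fin n → Fin n → ℝ :=
  fun i j => if i = j then 0 else a i + a j

/-!
On every pair of leaves one of the two star metrics already equals the quartet metric and the
other is at most it: `D̄` is attained on `{1,2}` and on the pairs `{1,j}`, `j ∈ {3,4}`, where `D`
falls short by `u` and `2g + u`; `D` is attained on `{3,4}` and on the pairs `{2,j}`, where `D̄`
falls short by `-w` and `2g - w`.
-/

theorem max_starMetricOf_eq_quartetMetric (e : Fin 4 → ℝ) {g u w : ℝ}
    (hg : 0 ≤ g) (hu : 0 ≤ u) (hw : w ≤ 0) (i j : Fin 4) :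
    max (starMetricOf ![e 0 - g - u, e 1 + g, e 2, e 3] i j)
      (starMetricOf ![e 0 + g - w / 2, e 1 - g + w / 2, e 2 + w / 2, e 3 + w / 2] i j) =
      quartetMetric e g i j := by
  fin_cases i <;> fin_cases j <;> simp [starMetricOf, quartetMetric] <;>
    first | linarith | (rw [max_def]; split_ifs <;> linarith)

theorem quartet_mixture_case_1_1_general (e : Fin 4 → ℝ)
    (g : ℝ) (hg : 0 < g)
    (u w : ℝ) (hu0 : 0 ≤ u) (hu1 : u < e 0 - g)
    (hw0 : w < 0) (hw1 : -2 * min (e 1 - g) (min (e 2) (e 3)) < w) :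
    (∀ i, 0 < ![e 0 - g - u, e 1 + g, e 2, e 3] i) ∧
    (∀ i, 0 < ![e 0 + g - w / 2, e 1 - g + w / 2,
                e 2 + w / 2, e 3 + w / 2] i) ∧
    (∀ i j, max (starMetricOf ![e 0 - g - u, e 1 + g, e 2, e 3] i j)
        (starMetricOf ![e 0 + g - w / 2, e 1 - g + w / 2,
          e 2 + w / 2, e 3 + w / 2] i j) = quartetMetric e g i j) := by
  obtain ⟨hw₁, hw₂, hw₃⟩ : -w / 2 < e 1 - g ∧ -w / 2 < e 2 ∧ -w / 2 < e 3 := by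
    simpa only [lt_min_iff] using (by linarith : -w / 2 < min (e 1 - g) (min (e 2) (e 3)))
  refine ⟨?_, ?_, max_starMetricOf_eq_quartetMetric e hg.le hu0 hw0.le⟩ <;>
    simp only [Fin.forall_fin_succ, IsEmpty.forall_iff, Matrix.cons_val_zero,
      Matrix.cons_val_succ, and_true] <;>
    refine ⟨?_, ?_, ?_, ?_⟩ <;> linarith

/-- Case 1.1: for the quartet (12|34) with `e₁ > g` and `e₂ > g`, and
parameters `0 ≤ u < e₁−g`, `0 > w > −2·min(e₂−g,e₃,e₄)`, the star tree metrics with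
pendant weights `(e₁−g−u, e₂+g, e₃, e₄)` and
`(e₁+g−w/2, e₂−g+w/2, e₃+w/2, e₄+w/2)` have all weights positive and their
tropical mixture equals the quartet metric. -/
theorem quartet_mixture_case_1_1 (e : Fin 4 → ℝ) (he : ∀ i, 0 < e i)
    (g : ℝ) (hg : 0 < g) (h1 : g < e 0) (h2 : g < e 1)
    (u w : ℝ) (hu0 : 0 ≤ u) (hu1 : u < e 0 - g)
    (hw0 : w < 0) (hw1 : -2 * min (e 1 - g) (min (e 2) (e 3)) < w) :
    (∀ i, 0 < ![e 0 - g - u, e 1 + g, e 2, e 3] i) ∧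
    (∀ i, 0 < ![e 0 + g - w / 2, e 1 - g + w / 2,
                e 2 + w / 2, e 3 + w / 2] i) ∧
    (∀ i j, max (starMetricOf ![e 0 - g - u, e 1 + g, e 2, e 3] i j)
        (starMetricOf ![e 0 + g - w / 2, e 1 - g + w / 2,
          e 2 + w / 2, e 3 + w / 2] i j) = quartetMetric e g i j) :=
  quartet_mixture_case_1_1_general e g hg u w hu0 hu1 hw0 hw1
end

section
/- Let T be the tree metric on 5 taxa with one internal edge, cherry {1,2} on one side and leaves {3,4,5} on the other, with pendant weights e₁,…,e₅ > 0 and internal weight g > 0 (so T(1,2)=e₁+e₂, T(i,j)=e_i+g+e_j for i∈{1,2}, j∈{3,4,5}, and T(i,j)=e_i+e_j for distinct i,j∈{3,4,5}). Assume e₁ > g and e₂ > g, and let u, w be real parameters with 0 ≤ u < e₁−g and 0 > w > −2·min(e₂−g, e₃, e₄, e₅). Define star tree metrics D with pendant weights (e₁−g−u, e₂+g, e₃, e₄, e₅) at leaves 1,…,5 and D̄ with pendant weights (e₁+g−w/2, e₂−g+w/2, e₃+w/2, e₄+w/2, e₅+w/2) at leaves 1,…,5. Then all ten of these weights are positive,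 and the tropical mixture D⊕D̄ equals T. -/
/-- The tree metric on 5 taxa with one internal edge of weight `g`, cherry
`{1,2}` (indices `0,1`) on one side and leaves `{3,4,5}` (indices `2,3,4`) on
the other, with pendant weights `e`. -/
def fiveTaxaMetric (e : Fin 5 → ℝ) (g : ℝ) : Fin 5 → Fin 5 → ℝ :=
  fun i j => if i = j then 0
    else e i + e j + (if decide (i.val < 2) ≠ decide (j.val < 2) then g else 0)

theorem max_starMetricOf {n : ℕ} (a b : Fin n → ℝ) (i j : Fin n) :
    max (starMetricOf a i j) (starMetricOf b i j) =
      if i = j then 0 else max (a i + a j) (b i + b j) := by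
  unfold starMetricOf
  split_ifs <;> simp

theorem five_taxa_mixture_case_1_1_general (e : Fin 5 → ℝ)
    (g : ℝ) (hg : 0 < g)
    (u w : ℝ) (hu0 : 0 ≤ u) (hu1 : u < e 0 - g)
    (hw0 : w < 0)
    (hw1 : -2 * min (e 1 - g) (min (e 2) (min (e 3) (e 4))) < w) :
    (∀ i, 0 < ![e 0 - g - u, e 1 + g, e 2, e 3, e 4] i) ∧
    (∀ i, 0 < ![e 0 + g - w / 2, e 1 - g + w / 2,
                e 2 + w / 2, e 3 + w / 2, e 4 + w / 2] i) ∧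
    (∀ i j, max (starMetricOf ![e 0 - g - u, e 1 + g, e 2, e 3, e 4] i j)
        (starMetricOf ![e 0 + g - w / 2, e 1 - g + w / 2,
          e 2 + w / 2, e 3 + w / 2, e 4 + w / 2] i j)
        = fiveTaxaMetric e g i j) := by
  obtain ⟨h1, h2, h3, h4⟩ :
      -w / 2 < e 1 - g ∧ -w / 2 < e 2 ∧ -w / 2 < e 3 ∧ -w / 2 < e 4 := by
    have hmin : -w / 2 < min (e 1 - g) (min (e 2) (min (e 3) (e 4))) := by linarith
    simpa only [lt_min_iff] using hmin
  refine ⟨fun i => ?_, fun i => ?_, fun i j => ?_⟩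
  · fin_cases i <;> simp <;> linarith
  · fin_cases i <;> simp <;> linarith
  · rw [max_starMetricOf]
    fin_cases i <;> fin_cases j <;> simp [fiveTaxaMetric] <;> grind

/-- for the 5-taxa one-internal-edge tree metric with cherry `{1,2}`,
`e₁ > g`, `e₂ > g`, and parameters `0 ≤ u < e₁−g`, `0 > w > −2·min(e₂−g,e₃,e₄,e₅)`,
the star tree metrics with pendant weights `(e₁−g−u, e₂+g, e₃, e₄, e₅)` and
`(e₁+g−w/2, e₂−g+w/2, e₃+w/2, e₄+w/2, e₅+w/2)` have all weights positive and
their tropical mixture equals the given tree metric. -/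
theorem five_taxa_mixture_case_1_1 (e : Fin 5 → ℝ) (he : ∀ i, 0 < e i)
    (g : ℝ) (hg : 0 < g) (h1 : g < e 0) (h2 : g < e 1)
    (u w : ℝ) (hu0 : 0 ≤ u) (hu1 : u < e 0 - g)
    (hw0 : w < 0)
    (hw1 : -2 * min (e 1 - g) (min (e 2) (min (e 3) (e 4))) < w) :
    (∀ i, 0 < ![e 0 - g - u, e 1 + g, e 2, e 3, e 4] i) ∧
    (∀ i, 0 < ![e 0 + g - w / 2, e 1 - g + w / 2,
                e 2 + w / 2, e 3 + w / 2, e 4 + w / 2] i) ∧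
    (∀ i j, max (starMetricOf ![e 0 - g - u, e 1 + g, e 2, e 3, e 4] i j)
        (starMetricOf ![e 0 + g - w / 2, e 1 - g + w / 2,
          e 2 + w / 2, e 3 + w / 2, e 4 + w / 2] i j)
        = fiveTaxaMetric e g i j) :=
  five_taxa_mixture_case_1_1_general e g hg u w hu0 hu1 hw0 hw1
end

section
/- Let T be the caterpillar tree metric on 5 taxa with two internal edges of weights g > 0 and h > 0, leaves 1,2 attached at one end, leaf 5 attached to the middle node, and leaves 3,4 attached at the other end: with pendant weights e₁,…,e₅ > 0, set T(1,2)=e₁+e₂, T(3,4)=e₃+e₄, T(1,5)=e₁+g+e₅, T(2,5)=e₂+g+e₅, T(3,5)=e₃+h+e₅, T(4,5)=e₄+h+e₅, and T(i,j)=e_i+g+h+e_j for i∈{1,2}, j∈{3,4}. Then T is NOT the tropical mixture of two star tree metrics on 5 taxa; that is, there exist no star tree metrics D, D̄ with T = D⊕D̄. -/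
/-!
A single star `a` satisfies `(a i + a k) + (a j + a l) = (a i + a j) + (a k + a l)`. So if
`T = max a b` off the diagonal and `T i j + T k l < T i k + T j l`, the values `T i k` and
`T j l` are not attained by the same star. Colour every pair by a star attaining it: the
quartets of the caterpillar force the pairs `{1,3}, {2,5}, {1,4}, {2,3}, {4,5}` (indices
`0, …, 4`) to alternate in colour around a 5-cycle, which two colours cannot do.
-/

theorem IsMixtureOfTwoStars.exists_eq_max_add {n : ℕ} {T : Fin n → Fin n → ℝ}
    (hT : IsMixtureOfTwoStars T) :
    ∃ a b : Fin n → ℝ, ∀ i j, i ≠ j → T i j = max (a i + a j) (b i + b j) := by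
  obtain ⟨D, Dbar, ⟨a, -, -, hD⟩, ⟨b, -, -, hDbar⟩, hmax⟩ := hT
  exact ⟨a, b, fun i j hij => by rw [hmax, hD i j hij, hDbar i j hij]⟩

theorem le_iff_not_le_of_four_point_lt {ι : Type*} {T : ι → ι → ℝ} {a b : ι → ℝ}
    (hT : ∀ i j, i ≠ j → T i j = max (a i + a j) (b i + b j)) (i j k l : ι)
    (hne : i ≠ j ∧ k ≠ l ∧ i ≠ k ∧ j ≠ l) (h : T i j + T k l < T i k + T j l) :
    b i + b k ≤ a i + a k ↔ ¬ b j + b l ≤ a j + a l := by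
  obtain ⟨hij, hkl, hik, hjl⟩ := hne
  rw [hT i j hij, hT k l hkl, hT i k hik, hT j l hjl] at h
  constructor
  · intro hik_a hjl_a
    rw [max_eq_left hik_a, max_eq_left hjl_a] at h
    linarith [le_max_left (a i + a j) (b i + b j), le_max_left (a k + a l) (b k + b l)]
  · intro hjl_b
    by_contra hik_b
    rw [max_eq_right (not_le.mp hik_b).le, max_eq_right (not_le.mp hjl_b).le] at h
    linarith [le_max_right (a i + a j) (b i + b j), le_max_right (a k + a l) (b k + b l)]

theorem caterpillar_not_mixture_general (e : Fin 5 → ℝ)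
    (g h : ℝ) (hg : 0 < g) (hh : 0 < h)
    (T : Fin 5 → Fin 5 → ℝ)
    (hsymm : ∀ i j, T i j = T j i)
    (h01 : T 0 1 = e 0 + e 1) (h23 : T 2 3 = e 2 + e 3)
    (h04 : T 0 4 = e 0 + g + e 4) (h14 : T 1 4 = e 1 + g + e 4)
    (h24 : T 2 4 = e 2 + h + e 4) (h34 : T 3 4 = e 3 + h + e 4)
    (h02 : T 0 2 = e 0 + g + h + e 2) (h03 : T 0 3 = e 0 + g + h + e 3)
    (h12 : T 1 2 = e 1 + g + h + e 2) :
    ¬ IsMixtureOfTwoStars T := by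
  intro hT
  obtain ⟨a, b, hab⟩ := hT.exists_eq_max_add
  have c02_14 := le_iff_not_le_of_four_point_lt hab 0 1 2 4 (by decide) (by linarith)
  have c03_14 := le_iff_not_le_of_four_point_lt hab 0 1 3 4 (by decide) (by linarith)
  have c03_12 := le_iff_not_le_of_four_point_lt hab 0 1 3 2 (by decide)
    (by linarith [hsymm 3 2])
  have c12_43 := le_iff_not_le_of_four_point_lt hab 1 4 2 3 (by decide)
    (by linarith [hsymm 4 3])
  have c02_43 := le_iff_not_le_of_four_point_lt hab 0 4 2 3 (by decide)
    (by linarith [hsymm 4 3])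
  tauto

/-- the caterpillar tree metric on 5 taxa with two internal edges of
weights `g, h > 0` (leaves 1,2 at one end, leaves 3,4 at the other end, leaf 5 at
the middle node; here taxa `1,…,5` are indices `0,…,4`) is NOT the tropical
mixture of two star tree metrics. -/
theorem caterpillar_not_mixture (e : Fin 5 → ℝ) (he : ∀ i, 0 < e i)
    (g h : ℝ) (hg : 0 < g) (hh : 0 < h)
    (T : Fin 5 → Fin 5 → ℝ)
    (hsymm : ∀ i j, T i j = T j i) (hdiag : ∀ i, T i i = 0)
    (h01 : T 0 1 = e 0 + e 1) (h23 : T 2 3 = e 2 + e 3)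
    (h04 : T 0 4 = e 0 + g + e 4) (h14 : T 1 4 = e 1 + g + e 4)
    (h24 : T 2 4 = e 2 + h + e 4) (h34 : T 3 4 = e 3 + h + e 4)
    (h02 : T 0 2 = e 0 + g + h + e 2) (h03 : T 0 3 = e 0 + g + h + e 3)
    (h12 : T 1 2 = e 1 + g + h + e 2) (h13 : T 1 3 = e 1 + g + h + e 3) :
    ¬ IsMixtureOfTwoStars T :=
  caterpillar_not_mixture_general e g h hg hh T hsymm h01 h23 h04 h14 h24 h34 h02 h03 h12
end

section
/- Let n ≥ 4, let D and D̄ be star tree metrics on n taxa, and suppose the tropical mixture T = D⊕D̄ satisfies the four point condition: for every four distinct taxa i,j,k,l, the maximum of the three sums T(i,j)+T(k,l), T(i,k)+T(j,l), T(i,l)+T(j,k) is attained at least twice. Then T is a tree metric realized by a tree with at most one internal edge: there exist a subset I of {1,…,n}, a real number g ≥ 0, and weights e_i > 0 for all i, such that for all i ≠ j, T(i,j) = e_i + e_j + g if exactly one of i, j lies in I, and T(i,j) = e_i + e_j otherwise. -/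
variable {α : Type*}

def FourPointAt (T : α → α → ℝ) (i j k l : α) : Prop :=
  (T i j + T k l = T i k + T j l ∧ T i l + T j k ≤ T i j + T k l) ∨
  (T i j + T k l = T i l + T j k ∧ T i k + T j l ≤ T i j + T k l) ∨
  (T i k + T j l = T i l + T j k ∧ T i j + T k l ≤ T i k + T j l)

def FourPointCondition (T : α → α → ℝ) : Prop :=
  ∀ i j k l, i ≠ j → i ≠ k → i ≠ l → j ≠ k → j ≠ l → k ≠ l → FourPointAt T i j k l

def HasOneInternalEdge [DecidableEq α] (T : α → α → ℝ) : Prop :=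
  ∃ (I : Finset α) (g : ℝ) (e : α → ℝ), 0 ≤ g ∧ (∀ i, 0 < e i) ∧
    ∀ i j, i ≠ j → T i j = e i + e j + (if (i ∈ I ∧ j ∉ I) ∨ (i ∉ I ∧ j ∈ I) then g else 0)

theorem FourPointCondition.of_eq_add_pendant {T M : α → α → ℝ} {b : α → ℝ}
    (hTM : ∀ x y, x ≠ y → T x y = b x + b y + M x y) (hT : FourPointCondition T) :
    FourPointCondition M := by
  intro i j k l hij hik hil hjk hjl hkl
  have h := hT i j k l hij hik hil hjk hjl hkl
  simp only [FourPointAt, hTM _ _ hij, hTM _ _ hik, hTM _ _ hil, hTM _ _ hjk, hTM _ _ hjl,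
    hTM _ _ hkl] at h
  rcases h with ⟨h₁, h₂⟩ | ⟨h₁, h₂⟩ | ⟨h₁, h₂⟩
  · exact Or.inl ⟨by linarith, by linarith⟩
  · exact Or.inr <| Or.inl ⟨by linarith, by linarith⟩
  · exact Or.inr <| Or.inr ⟨by linarith, by linarith⟩

theorem HasOneInternalEdge.congr [DecidableEq α] {T T' : α → α → ℝ}
    (h : ∀ i j, i ≠ j → T i j = T' i j) (hT' : HasOneInternalEdge T') : HasOneInternalEdge T := by
  obtain ⟨I, g, e, hg, he, hT'⟩ := hT'
  exact ⟨I, g, e, hg, he, fun i j hij => (h i j hij).trans (hT' i j hij)⟩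

theorem hasOneInternalEdge_of_eq_add {T : α → α → ℝ} [DecidableEq α] {e : α → ℝ}
    (he : ∀ i, 0 < e i) (hT : ∀ i j, i ≠ j → T i j = e i + e j) : HasOneInternalEdge T :=
  ⟨∅, 0, e, le_rfl, he, fun i j hij => by simp [hT i j hij]⟩

theorem max_add_eq_add_max_sub_add_sub (a a' b b' : ℝ) :
    max (a + a') (b + b') = b + b' + max ((a - b) + (a' - b')) 0 := by
  rw [← max_add_add_left, add_zero]
  congr 1
  ring

theorem max_add_self_zero (c : ℝ) : max (c + c) 0 = 2 * max c 0 := by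
  rcases le_total c 0 with h | h
  · rw [max_eq_right h, max_eq_right (by linarith)]; ring
  · rw [max_eq_left h, max_eq_left (by linarith)]; ring

section PairSums

variable {f : α → ℝ}

theorem eq_of_fourPointAt_max_add_zero {i j k l : α}
    (h : FourPointAt (fun x y => max (f x + f y) 0) i j k l)
    (hji : f j ≤ f i) (hkj : f k ≤ f j) (hlk : f l ≤ f k)
    (hij : 0 < f i + f j) (hkl : f k + f l < 0) : f j = f k := by
  by_contra hne
  have hkj' : f k < f j := lt_of_le_of_ne hkj (Ne.symm hne)
  have hikjl : max (f i + f k) 0 + max (f j + f l) 0 < f i + f j := by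
    rcases le_total (f j + f l) 0 with h | h
    · rw [max_eq_right h, add_zero]; exact max_lt (by linarith) hij
    · rw [max_eq_left h, max_eq_left (by linarith)]; linarith
  have hiljk : max (f i + f l) 0 + max (f j + f k) 0 < f i + f j := by
    rcases le_total (f i + f l) 0 with h | h
    · rw [max_eq_right h, zero_add]; exact max_lt (by linarith) hij
    · rw [max_eq_left h]
      rcases le_total (f j + f k) 0 with h' | h'
      · rw [max_eq_right h']; linarith
      · rw [max_eq_left h']; linarith
  -- `f i + f j` is then the strict maximum of the three pair sums, attained only once.
  simp only [FourPointAt, max_eq_left hij.le, max_eq_right hkl.le] at h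
  rcases h with ⟨h₁, -⟩ | ⟨h₁, -⟩ | ⟨-, h₂⟩ <;> linarith

theorem add_le_add_of_forall_le_of_forall_ne_le {x u p q : α} (hx : ∀ y, f y ≤ f x)
    (hu : ∀ y, y ≠ x → f y ≤ f u) (hpq : p ≠ q) : f p + f q ≤ f x + f u := by
  by_cases hp : p = x
  · subst hp; linarith [hu q (Ne.symm hpq)]
  · linarith [hu p hp, hx q]

theorem exists_outliers_of_fourPointCondition [Fintype α] [DecidableEq α]
    (hα : 3 ≤ Fintype.card α) (hf : FourPointCondition fun x y => max (f x + f y) 0)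
    (hpos : ∃ p q, p ≠ q ∧ 0 < f p + f q) (hneg : ∃ r s, r ≠ s ∧ f r + f s < 0) :
    ∃ x₁ x₀ c, x₁ ≠ x₀ ∧ (∀ m, m ≠ x₁ → m ≠ x₀ → f m = c) ∧ f x₀ ≤ c ∧ c ≤ f x₁ ∧
      0 < f x₁ + c ∧ f x₀ + c < 0 := by
  obtain ⟨p, q, hpq, hpq₀⟩ := hpos
  obtain ⟨r, s, hrs, hrs₀⟩ := hneg
  have : Nonempty α := Fintype.card_pos_iff.mp (by omega)
  obtain ⟨x₁, hx₁⟩ := Finite.exists_max f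
  obtain ⟨x₀, hx₀₁, hx₀⟩ := (Finset.univ.erase x₁).exists_min_image f
    (Finset.card_pos.mp (by
      rw [Finset.card_erase_of_mem (Finset.mem_univ _), Finset.card_univ]; omega))
  set S := (Finset.univ.erase x₁).erase x₀
  have hS : S.Nonempty := Finset.card_pos.mp (by
    rw [Finset.card_erase_of_mem hx₀₁, Finset.card_erase_of_mem (Finset.mem_univ _),
      Finset.card_univ]; omega)
  obtain ⟨u, huS, hu⟩ := S.exists_max_image f hS
  obtain ⟨v, hvS, hv⟩ := S.exists_min_image f hS
  simp only [S, Finset.mem_erase, Finset.mem_univ, and_true] at hx₀₁ huS hvS hu hv hx₀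
  have hx₀min : ∀ y, f x₀ ≤ f y := fun y => by
    by_cases hy : y = x₁
    · exact hy ▸ hx₁ x₀
    · exact hx₀ y hy
  have hu' : ∀ y, y ≠ x₁ → f y ≤ f u := fun y hy => by
    by_cases hy₀ : y = x₀
    · exact hy₀ ▸ hx₀min u
    · exact hu y ⟨hy₀, hy⟩
  have hv' : ∀ y, y ≠ x₀ → -f y ≤ -f v := fun y hy => by
    by_cases hy₁ : y = x₁
    · exact neg_le_neg (hy₁ ▸ hx₁ v)
    · exact neg_le_neg (hv y ⟨hy, hy₁⟩)
  have htop : 0 < f x₁ + f u := hpq₀.trans_le (add_le_add_of_forall_le_of_forall_ne_le hx₁ hu' hpq)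
  have hbot : f x₀ + f v < 0 := by
    have := add_le_add_of_forall_le_of_forall_ne_le (f := fun y => -f y)
      (fun y => neg_le_neg (hx₀min y)) hv' hrs
    linarith
  have huv : f u = f v := by
    by_cases h : u = v
    · rw [h]
    exact eq_of_fourPointAt_max_add_zero
      (hf x₁ u v x₀ (Ne.symm huS.2) (Ne.symm hvS.2) (Ne.symm hx₀₁) h huS.1 hvS.1)
      (hx₁ u) (hv u huS) (hx₀min v) htop (by linarith)
  refine ⟨x₁, x₀, f u, Ne.symm hx₀₁, fun m h₁ h₀ => ?_, hx₀min u, hx₁ u, htop, huv ▸ hbot⟩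
  exact le_antisymm (hu m ⟨h₀, h₁⟩) (huv ▸ hv m ⟨h₀, h₁⟩)
theorem hasOneInternalEdge_of_outliers [DecidableEq α] {b : α → ℝ} (hb : ∀ i, 0 < b i)
    {x₁ x₀ : α} {c : ℝ} (hx : x₁ ≠ x₀) (hmid : ∀ m, m ≠ x₁ → m ≠ x₀ → f m = c)
    (hbf : 0 < b x₀ + f x₀) (hc₀ : f x₀ ≤ c) (hc₁ : c ≤ f x₁) (htop : 0 < f x₁ + c)
    (hbot : f x₀ + c < 0) :
    HasOneInternalEdge fun i j => b i + b j + max (f i + f j) 0 := by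
  obtain ⟨P, hP⟩ : ∃ P, max (f x₁ + f x₀) 0 = P := ⟨_, rfl⟩
  -- Middle taxa get pendant weight `max (a m) (b m) = b m + max c 0`; then `g` is forced by
  -- `T x₁ x₀ = e x₁ + e x₀`.
  obtain ⟨g, hg_def⟩ : ∃ g, 2 * g = f x₁ + c - 2 * max c 0 - P := ⟨_, mul_div_cancel₀ _ two_ne_zero⟩
  have hP₀ : 0 ≤ P := hP ▸ le_max_right _ _
  have hP₁ : f x₁ + f x₀ ≤ P := hP ▸ le_max_left _ _
  have hg : 0 ≤ g := by
    have : P ≤ f x₁ + c - 2 * max c 0 := by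
      rcases le_total c 0 with hc | hc
      · rw [max_eq_right hc, ← hP]; exact max_le (by linarith) (by linarith)
      · rw [max_eq_left hc, ← hP]; exact max_le (by linarith) (by linarith)
    linarith
  refine ⟨{x₁, x₀}, g, fun i => if i = x₁ then b x₁ + f x₁ + c - max c 0 - g
      else if i = x₀ then b x₀ - max c 0 - g else b i + max c 0, hg, fun i => ?_, ?_⟩
  · have := le_max_right c 0
    dsimp only
    split_ifs
    · linarith [hb x₁]
    · linarith [hb x₀]
    · linarith [hb i]
  · have hmax_top : max (c + f x₁) 0 = c + f x₁ := max_eq_left (by linarith : 0 ≤ c + f x₁)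
    have hmax_bot : max (c + f x₀) 0 = 0 := max_eq_right (by linarith : c + f x₀ ≤ 0)
    have hP' : max (f x₀ + f x₁) 0 = P := by rw [add_comm, hP]
    have kinds : ∀ y, y = x₁ ∨ y = x₀ ∨ (y ≠ x₁ ∧ y ≠ x₀) := by tauto
    intro i j hij
    rcases kinds i with rfl | rfl | ⟨hi₁, hi₀⟩ <;> rcases kinds j with rfl | rfl | ⟨hj₁, hj₀⟩ <;>
      grind [max_add_self_zero]

theorem hasOneInternalEdge_of_fourPointCondition [Fintype α] [DecidableEq α]
    (hα : 3 ≤ Fintype.card α) {b : α → ℝ} (hb : ∀ i, 0 < b i) (hbf : ∀ i, 0 < b i + f i)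
    (hf : FourPointCondition fun x y => max (f x + f y) 0) :
    HasOneInternalEdge fun i j => b i + b j + max (f i + f j) 0 := by
  by_cases hneg : ∀ i j, i ≠ j → f i + f j ≤ 0
  · exact hasOneInternalEdge_of_eq_add hb fun i j hij => by
      rw [max_eq_right (hneg i j hij), add_zero]
  by_cases hpos : ∀ i j, i ≠ j → 0 ≤ f i + f j
  · exact hasOneInternalEdge_of_eq_add hbf fun i j hij => by
      rw [max_eq_left (hpos i j hij)]; ring
  push Not at hneg hpos
  obtain ⟨x₁, x₀, c, hx, hmid, hc₀, hc₁, htop, hbot⟩ :=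
    exists_outliers_of_fourPointCondition hα hf hneg hpos
  exact hasOneInternalEdge_of_outliers hb hx hmid (hbf x₀) hc₀ hc₁ htop hbot

end PairSums

/-- if `n ≥ 4` and the tropical mixture `T = D ⊕ D̄` of two star
tree metrics satisfies the four point condition (for all four distinct taxa the
maximum of the three pair-sums is attained at least twice), then `T` is realized
by a tree with at most one internal edge: there are a subset `I`, a weight
`g ≥ 0`, and pendant weights `e_i > 0` with `T(i,j) = e_i + e_j + g` when exactly
one of `i,j` lies in `I`, and `T(i,j) = e_i + e_j` otherwise, for all `i ≠ j`. -/
theorem mixture_fourpoint_implies_one_internal_edge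
    (n : ℕ) (hn : 4 ≤ n) (D Dbar : Fin n → Fin n → ℝ)
    (hD : IsStarTreeMetric D) (hDbar : IsStarTreeMetric Dbar)
    (T : Fin n → Fin n → ℝ) (hT : ∀ i j, T i j = max (D i j) (Dbar i j))
    (hfour : ∀ i j k l : Fin n,
      i ≠ j → i ≠ k → i ≠ l → j ≠ k → j ≠ l → k ≠ l →
      (T i j + T k l = T i k + T j l ∧ T i l + T j k ≤ T i j + T k l) ∨
      (T i j + T k l = T i l + T j k ∧ T i k + T j l ≤ T i j + T k l) ∨
      (T i k + T j l = T i l + T j k ∧ T i j + T k l ≤ T i k + T j l)) :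
    ∃ (I : Finset (Fin n)) (g : ℝ) (e : Fin n → ℝ),
      0 ≤ g ∧ (∀ i, 0 < e i) ∧
      ∀ i j, i ≠ j →
        T i j = e i + e j +
          (if (i ∈ I ∧ j ∉ I) ∨ (i ∉ I ∧ j ∈ I) then g else 0) := by
  obtain ⟨a, ha, -, hDa⟩ := hD
  obtain ⟨b, hb, -, hDb⟩ := hDbar
  have hTab : ∀ i j, i ≠ j → T i j = b i + b j + max ((a i - b i) + (a j - b j)) 0 :=
    fun i j hij => by rw [hT, hDa i j hij, hDb i j hij, max_add_eq_add_max_sub_add_sub]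
  have hfour' : FourPointCondition fun x y => max ((a x - b x) + (a y - b y)) 0 :=
    FourPointCondition.of_eq_add_pendant hTab hfour
  have hcard : 3 ≤ Fintype.card (Fin n) := by rw [Fintype.card_fin]; omega
  exact HasOneInternalEdge.congr hTab <|
    hasOneInternalEdge_of_fourPointCondition hcard hb (fun i => by simpa using ha i) hfour'
end
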